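/- arXiv:2504.16522 — 3 statements merged into one kernel-verified Lean document; each statement's English description precedes it below -/
import Mathlib

section
/- For all natural numbers n and k, the type B Stirling number of the second kind satisfies S_B(n,k) = Σ_{i=k}^{n} 2^(i-k) · C(n,i) · S(i,k), where S(i,k) denotes the classical Stirling number of the second kind. -/
/-- The classical Stirling numbers of the second kind, defined by the recurrence
`S(n,k) = S(n-1,k-1) + k·S(n-1,k)` with `S(0,k) = δ_{0,k}`. -/
def stirling2 : ℕ → ℕ → ℕ
  | 0, 0 => 1
  | 0, _ + 1 => 0
  | _ + 1, 0 => 0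
  | n + 1, k + 1 => stirling2 n k + (k + 1) * stirling2 n (k + 1)

/-- The type `B` Stirling numbers of the second kind, defined by the recurrence
`S_B(n,k) = S_B(n-1,k-1) + (2k+1)·S_B(n-1,k)` with `S_B(0,k) = δ_{0,k}`. -/
def stirlingB : ℕ → ℕ → ℕ
  | 0, 0 => 1
  | 0, _ + 1 => 0
  | n + 1, 0 => stirlingB n 0
  | n + 1, k + 1 => stirlingB n k + (2 * (k + 1) + 1) * stirlingB n (k + 1)

/-- The type `B` Bell numbers: `B(n) = Σ_{k=0}^{n} S_B(n,k)`. -/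
def bellB (n : ℕ) : ℕ := ∑ k ∈ Finset.range (n + 1), stirlingB n k

lemma stirling2_eq_zero_of_lt : ∀ {i k : ℕ}, i < k → stirling2 i k = 0 := by
  intro i
  induction i with
  | zero => intro k h; cases k with
    | zero => omega
    | succ k => rfl
  | succ i ih =>
    intro k h
    cases k with
    | zero => omega
    | succ k =>
      show stirling2 i k + (k + 1) * stirling2 i (k + 1) = 0
      rw [ih (by omega), ih (by omega)]
      simp

lemma sum_shift (F : ℕ → ℕ) (a b : ℕ) :
    ∑ i ∈ Finset.Icc (a + 1) (b + 1), F i = ∑ j ∈ Finset.Icc a b, F (j + 1) := by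
  rw [← Finset.map_add_right_Icc a b 1, Finset.sum_map]
  rfl

lemma rhs_zero (n : ℕ) :
    ∑ i ∈ Finset.Icc 0 n, 2 ^ (i - 0) * Nat.choose n i * stirling2 i 0 = 1 := by
  rw [Finset.sum_eq_single_of_mem 0 (by simp)]
  · simp [stirling2]
  · intro i _ hi
    obtain ⟨j, rfl⟩ := Nat.exists_eq_succ_of_ne_zero hi
    show _ * stirling2 (j + 1) 0 = 0
    simp [stirling2]

/-- `S_B(n,k) = Σ_{i=k}^{n} 2^(i-k) · C(n,i) · S(i,k)`. -/
theorem stirlingB_eq_sum_stirling2 (n k : ℕ) :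
    stirlingB n k = ∑ i ∈ Finset.Icc k n, 2 ^ (i - k) * Nat.choose n i * stirling2 i k := by
  induction n generalizing k with
  | zero =>
    cases k with
    | zero => simp [stirlingB, stirling2]
    | succ k =>
      rw [Finset.Icc_eq_empty (by omega), Finset.sum_empty]
      rfl
  | succ n ih =>
    cases k with
    | zero =>
      rw [show stirlingB (n + 1) 0 = stirlingB n 0 from rfl, ih 0, rhs_zero, rhs_zero]
    | succ k =>
      rw [show stirlingB (n + 1) (k + 1)
            = stirlingB n k + (2 * (k + 1) + 1) * stirlingB n (k + 1) from rfl,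
        ih k, ih (k + 1)]
      rw [show k + 1 = k + 1 from rfl, sum_shift (fun i => 2 ^ (i - (k + 1)) * Nat.choose (n + 1) i * stirling2 i (k + 1)) k n]
      have expand : ∀ j ∈ Finset.Icc k n,
          2 ^ (j + 1 - (k + 1)) * Nat.choose (n + 1) (j + 1) * stirling2 (j + 1) (k + 1)
          = 2 ^ (j - k) * Nat.choose n j * stirling2 j k
            + (k + 1) * (2 ^ (j - k) * Nat.choose n j * stirling2 j (k + 1))
            + 2 ^ (j + 1 - (k + 1)) * Nat.choose n (j + 1) * stirling2 (j + 1) (k + 1) := by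
        intro j _
        rw [Nat.choose_succ_succ n j,
          show stirling2 (j + 1) (k + 1) = stirling2 j k + (k + 1) * stirling2 j (k + 1) from rfl,
          show j + 1 - (k + 1) = j - k by omega]
        ring
      rw [Finset.sum_congr rfl expand, Finset.sum_add_distrib, Finset.sum_add_distrib,
        ← Finset.mul_sum]
      -- B = 2 * G
      have hB : ∑ j ∈ Finset.Icc k n, 2 ^ (j - k) * Nat.choose n j * stirling2 j (k + 1)
          = 2 * ∑ i ∈ Finset.Icc (k + 1) n,
              2 ^ (i - (k + 1)) * Nat.choose n i * stirling2 i (k + 1) := by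
        rw [Finset.mul_sum]
        rw [← Finset.sum_subset (Finset.Icc_subset_Icc_left (by omega) :
            Finset.Icc (k + 1) n ⊆ Finset.Icc k n)
          (fun x hx hx' => by
            have : x = k := by simp [Finset.mem_Icc] at hx hx' ⊢; omega
            subst this
            rw [stirling2_eq_zero_of_lt (by omega), mul_zero])]
        apply Finset.sum_congr rfl
        intro j hj
        simp only [Finset.mem_Icc] at hj
        rw [show j - k = (j - (k + 1)) + 1 by omega, pow_succ]
        ring
      -- C2 = G
      have hC : ∑ j ∈ Finset.Icc k n,
            2 ^ (j + 1 - (k + 1)) * Nat.choose n (j + 1) * stirling2 (j + 1) (k + 1)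
          = ∑ i ∈ Finset.Icc (k + 1) n,
              2 ^ (i - (k + 1)) * Nat.choose n i * stirling2 i (k + 1) := by
        rw [← sum_shift (fun i => 2 ^ (i - (k + 1)) * Nat.choose n i * stirling2 i (k + 1)) k n]
        symm
        apply Finset.sum_subset (Finset.Icc_subset_Icc_right (by omega))
        intro x hx hx'
        have : x = n + 1 := by simp [Finset.mem_Icc] at hx hx' ⊢; omega
        subst this
        rw [Nat.choose_eq_zero_of_lt (by omega), mul_zero, zero_mul]
      rw [hB, hC]
      ring
end

section
/- For all natural numbers n ≥ 0, the type B Bell numbers satisfy the recurrence B(n+1) = B(n) + Σ_{k=0}^{n} 2^k · C(n,k) · B(n-k). -/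
lemma stirlingB_zero_right (n : ℕ) : stirlingB n 0 = 1 := by
  induction n with
  | zero => rfl
  | succ n ih => simpa [stirlingB] using ih

lemma stirlingB_eq_zero {n k : ℕ} (h : n < k) : stirlingB n k = 0 := by
  induction n generalizing k with
  | zero =>
    cases k with
    | zero => omega
    | succ k => rfl
  | succ n ih =>
    cases k with
    | zero => omega
    | succ k =>
      have h1 : stirlingB n k = 0 := ih (by omega)
      have h2 : stirlingB n (k + 1) = 0 := ih (by omega)
      simp [stirlingB, h1, h2]

lemma two_mul_stirlingB_one (n : ℕ) : 2 * stirlingB n 1 + 1 = 3 ^ n := by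
  induction n with
  | zero => rfl
  | succ n ih =>
    have : stirlingB (n + 1) 1 = stirlingB n 0 + 3 * stirlingB n 1 := rfl
    rw [this, stirlingB_zero_right]
    ring_nf
    ring_nf at ih
    omega

lemma sum_two_pow_choose (n : ℕ) :
    ∑ j ∈ Finset.range (n + 1), 2 ^ j * n.choose j = 3 ^ n := by
  have h := add_pow 2 1 n (R := ℕ)
  simp only [one_pow, mul_one] at h
  norm_num at h
  rw [← h]

lemma sum_pascal (g : ℕ → ℕ) (n : ℕ) :
    ∑ j ∈ Finset.range (n + 2), 2 ^ j * (n + 1).choose j * g j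
      = ∑ j ∈ Finset.range (n + 1), 2 ^ j * n.choose j * g j
        + 2 * ∑ j ∈ Finset.range (n + 1), 2 ^ j * n.choose j * g (j + 1) := by
  rw [Finset.sum_range_succ' (fun j => 2 ^ j * (n + 1).choose j * g j) (n + 1)]
  have hsplit : ∀ j, 2 ^ (j + 1) * (n + 1).choose (j + 1) * g (j + 1)
      = 2 ^ (j + 1) * n.choose (j + 1) * g (j + 1)
        + 2 * (2 ^ j * n.choose j * g (j + 1)) := by
    intro j
    rw [Nat.choose_succ_succ']
    ring
  rw [Finset.sum_congr rfl fun j _ => hsplit j, Finset.sum_add_distrib, ← Finset.mul_sum]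
  have hfirst : ∑ j ∈ Finset.range (n + 1), 2 ^ (j + 1) * n.choose (j + 1) * g (j + 1)
      = ∑ j ∈ Finset.range n, 2 ^ (j + 1) * n.choose (j + 1) * g (j + 1) := by
    rw [Finset.sum_range_succ]
    simp [Nat.choose_succ_self]
  rw [hfirst]
  have hback := Finset.sum_range_succ' (fun j => 2 ^ j * n.choose j * g j) n
  simp only [pow_zero, Nat.choose_zero_right, one_mul, mul_one] at hback ⊢
  omega

lemma stirlingB_key (n m : ℕ) :
    stirlingB (n + 1) (m + 1)
      = stirlingB n (m + 1)
        + ∑ j ∈ Finset.range (n + 1), 2 ^ j * n.choose j * stirlingB (n - j) m := by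
  induction n generalizing m with
  | zero =>
    cases m with
    | zero => simp [stirlingB]
    | succ m => simp [stirlingB]
  | succ n ih =>
    cases m with
    | zero =>
      have h2 : (∑ j ∈ Finset.range (n + 1 + 1),
            2 ^ j * (n + 1).choose j * stirlingB (n + 1 - j) 0) = 3 ^ (n + 1) := by
        rw [Finset.sum_congr rfl fun j _ => by rw [stirlingB_zero_right, mul_one]]
        exact sum_two_pow_choose (n + 1)
      have h1 : stirlingB (n + 1 + 1) (0 + 1)
          = stirlingB (n + 1) 0 + 3 * stirlingB (n + 1) 1 := rfl
      have h3 := two_mul_stirlingB_one (n + 1)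
      have h5 : stirlingB (n + 1) (0 + 1) = stirlingB (n + 1) 1 := rfl
      rw [h1, h2, h5, stirlingB_zero_right]
      omega
    | succ m =>
      -- abbreviations: a = f n (m+1), b = f n (m+2), A, B sums over range (n+1)
      have hS : ∑ j ∈ Finset.range (n + 2),
            2 ^ j * (n + 1).choose j * stirlingB (n + 1 - j) (m + 1)
          = (∑ j ∈ Finset.range (n + 1), 2 ^ j * n.choose j * stirlingB (n - j) m)
            + (2 * (m + 2) + 1)
              * ∑ j ∈ Finset.range (n + 1), 2 ^ j * n.choose j * stirlingB (n - j) (m + 1) := by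
        rw [sum_pascal (fun j => stirlingB (n + 1 - j) (m + 1)) n]
        have hterm : ∀ j ∈ Finset.range (n + 1),
            2 ^ j * n.choose j * stirlingB (n + 1 - j) (m + 1)
              = 2 ^ j * n.choose j * stirlingB (n - j) m
                + (2 * (m + 1) + 1) * (2 ^ j * n.choose j * stirlingB (n - j) (m + 1)) := by
          intro j hj
          rw [Finset.mem_range] at hj
          have hnj : n + 1 - j = (n - j) + 1 := by omega
          rw [hnj]
          have : stirlingB ((n - j) + 1) (m + 1)
              = stirlingB (n - j) m + (2 * (m + 1) + 1) * stirlingB (n - j) (m + 1) := rfl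
          rw [this]
          ring
        have hrepl : ∀ j, n + 1 - (j + 1) = n - j := fun j => by omega
        simp only [hrepl]
        rw [Finset.sum_congr rfl hterm, Finset.sum_add_distrib, ← Finset.mul_sum]
        ring
      have h1 : stirlingB (n + 2) (m + 2)
          = stirlingB (n + 1) (m + 1) + (2 * (m + 2) + 1) * stirlingB (n + 1) (m + 2) := rfl
      have h4 : stirlingB (n + 1) (m + 2)
          = stirlingB n (m + 1) + (2 * (m + 2) + 1) * stirlingB n (m + 2) := rfl
      have h5 : stirlingB n (m + 1) + (2 * (m + 2) + 1) * stirlingB n (m + 2)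
          = stirlingB n (m + 2)
            + ∑ j ∈ Finset.range (n + 1), 2 ^ j * n.choose j * stirlingB (n - j) (m + 1) := by
        rw [← h4, ih (m + 1)]
      rw [h1, ih m, hS, ih (m + 1)]
      calc stirlingB n (m + 1)
            + (∑ j ∈ Finset.range (n + 1), 2 ^ j * n.choose j * stirlingB (n - j) m)
            + (2 * (m + 2) + 1)
              * (stirlingB n (m + 2)
                + ∑ j ∈ Finset.range (n + 1), 2 ^ j * n.choose j * stirlingB (n - j) (m + 1))
          = (stirlingB n (m + 1) + (2 * (m + 2) + 1) * stirlingB n (m + 2))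
            + ((∑ j ∈ Finset.range (n + 1), 2 ^ j * n.choose j * stirlingB (n - j) m)
              + (2 * (m + 2) + 1)
                * ∑ j ∈ Finset.range (n + 1), 2 ^ j * n.choose j * stirlingB (n - j) (m + 1)) := by
            ring
        _ = (stirlingB n (m + 2)
              + ∑ j ∈ Finset.range (n + 1), 2 ^ j * n.choose j * stirlingB (n - j) (m + 1))
            + ((∑ j ∈ Finset.range (n + 1), 2 ^ j * n.choose j * stirlingB (n - j) m)
              + (2 * (m + 2) + 1)
                * ∑ j ∈ Finset.range (n + 1), 2 ^ j * n.choose j * stirlingB (n - j) (m + 1)) := by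
            rw [h5]
        _ = stirlingB n (m + 2)
              + ∑ j ∈ Finset.range (n + 1), 2 ^ j * n.choose j * stirlingB (n - j) (m + 1)
            + ((∑ j ∈ Finset.range (n + 1), 2 ^ j * n.choose j * stirlingB (n - j) m)
              + (2 * (m + 2) + 1)
                * ∑ j ∈ Finset.range (n + 1), 2 ^ j * n.choose j * stirlingB (n - j) (m + 1)) := by
            ring

/-- `B(n+1) = B(n) + Σ_{k=0}^{n} 2^k · C(n,k) · B(n-k)`. -/
theorem bellB_succ (n : ℕ) :
    bellB (n + 1)
      = bellB n + ∑ k ∈ Finset.range (n + 1), 2 ^ k * Nat.choose n k * bellB (n - k) := by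
  have hsum : ∀ j ∈ Finset.range (n + 1),
      (∑ m ∈ Finset.range (n + 1), stirlingB (n - j) m)
        = bellB (n - j) := by
    intro j hj
    rw [Finset.mem_range] at hj
    unfold bellB
    symm
    apply Finset.sum_subset
    · intro x hx
      rw [Finset.mem_range] at hx ⊢
      omega
    · intro x _ hx
      rw [Finset.mem_range, not_lt] at hx
      exact stirlingB_eq_zero (by omega)
  unfold bellB
  rw [Finset.sum_range_succ' (fun k => stirlingB (n + 1) k) (n + 1)]
  rw [Finset.sum_congr rfl fun m _ => stirlingB_key n m]
  rw [Finset.sum_add_distrib, Finset.sum_comm]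
  have hmul : ∀ j ∈ Finset.range (n + 1),
      (∑ m ∈ Finset.range (n + 1), 2 ^ j * n.choose j * stirlingB (n - j) m)
        = 2 ^ j * n.choose j * bellB (n - j) := by
    intro j hj
    rw [← Finset.mul_sum, hsum j hj]
  rw [Finset.sum_congr rfl hmul]
  rw [Finset.sum_range_succ (fun m => stirlingB n (m + 1)) n]
  rw [stirlingB_eq_zero (Nat.lt_succ_self n)]
  rw [Finset.sum_range_succ' (fun k => stirlingB n k) n]
  have hz : stirlingB (n + 1) 0 = stirlingB n 0 := rfl
  rw [hz]
  simp only [bellB]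
  omega
end

section
/- For all natural numbers n ≥ 1, Σ_{i=1}^{n} C(n,i) · Σ_{k=0}^{n-i} 2^(n-i-k) · S(n-i,k) = B(n) - Σ_{k=0}^{n} 2^(n-k) · S(n,k), where S denotes the classical Stirling numbers of the second kind. -/
lemma stirling2_eq_zero : ∀ {n k : ℕ}, n < k → stirling2 n k = 0 := by
  intro n
  induction n with
  | zero => intro k h; cases k with
    | zero => omega
    | succ k => rfl
  | succ n ih =>
    intro k h
    cases k with
    | zero => omega
    | succ k =>
      show stirling2 n k + (k + 1) * stirling2 n (k + 1) = 0
      rw [ih (by omega), ih (by omega)]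
      simp

/-- Dowling-type numbers -/
def dow (m : ℕ) : ℕ := ∑ k ∈ Finset.range (m + 1), 2 ^ (m - k) * stirling2 m k

lemma stirlingB_eq (n : ℕ) : ∀ k,
    stirlingB n k = ∑ i ∈ Finset.range (n + 1),
      Nat.choose n i * (2 ^ (i - k) * stirling2 i k) := by
  induction n with
  | zero =>
    intro k
    cases k with
    | zero => simp [stirlingB, stirling2]
    | succ k => simp [stirlingB, stirling2_eq_zero (Nat.succ_pos k)]
  | succ n ih =>
    intro k
    have peel : ∑ i ∈ Finset.range (n + 2),
        Nat.choose (n + 1) i * (2 ^ (i - k) * stirling2 i k)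
        = (∑ i ∈ Finset.range (n + 1),
            Nat.choose (n + 1) (i + 1) * (2 ^ (i + 1 - k) * stirling2 (i + 1) k))
          + Nat.choose (n + 1) 0 * (2 ^ (0 - k) * stirling2 0 k) :=
      Finset.sum_range_succ' _ _
    have pascal : ∀ i, Nat.choose (n + 1) (i + 1) = Nat.choose n i + Nat.choose n (i + 1) := by
      intro i; rw [Nat.choose_succ_succ]
    have split : ∑ i ∈ Finset.range (n + 2),
        Nat.choose (n + 1) i * (2 ^ (i - k) * stirling2 i k)
        = (∑ i ∈ Finset.range (n + 1),
            Nat.choose n i * (2 ^ (i + 1 - k) * stirling2 (i + 1) k))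
          + ∑ i ∈ Finset.range (n + 1),
            Nat.choose n i * (2 ^ (i - k) * stirling2 i k) := by
      rw [peel]
      have : (∑ i ∈ Finset.range (n + 1),
            Nat.choose (n + 1) (i + 1) * (2 ^ (i + 1 - k) * stirling2 (i + 1) k))
          = (∑ i ∈ Finset.range (n + 1),
            Nat.choose n i * (2 ^ (i + 1 - k) * stirling2 (i + 1) k))
          + ∑ i ∈ Finset.range (n + 1),
            Nat.choose n (i + 1) * (2 ^ (i + 1 - k) * stirling2 (i + 1) k) := by
        rw [← Finset.sum_add_distrib]
        refine Finset.sum_congr rfl fun i _ => ?_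
        rw [pascal i, Nat.add_mul]
      rw [this]
      have : (∑ i ∈ Finset.range (n + 1),
            Nat.choose n (i + 1) * (2 ^ (i + 1 - k) * stirling2 (i + 1) k))
          + Nat.choose (n + 1) 0 * (2 ^ (0 - k) * stirling2 0 k)
          = ∑ i ∈ Finset.range (n + 2),
            Nat.choose n i * (2 ^ (i - k) * stirling2 i k) := by
        rw [Finset.sum_range_succ' (fun i => Nat.choose n i * (2 ^ (i - k) * stirling2 i k))]
        simp
      rw [add_assoc, this, Finset.sum_range_succ _ (n + 1),
        Nat.choose_succ_self, zero_mul, add_zero]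
    cases k with
    | zero =>
      show stirlingB n 0 = _
      rw [split]
      have h1 : ∀ i ∈ Finset.range (n + 1),
          Nat.choose n i * (2 ^ (i + 1 - 0) * stirling2 (i + 1) 0) = 0 := by
        intro i _
        show Nat.choose n i * (2 ^ (i + 1) * 0) = 0
        simp
      rw [Finset.sum_congr rfl h1, Finset.sum_const, smul_zero, zero_add]
      exact ih 0
    | succ k =>
      show stirlingB n k + (2 * (k + 1) + 1) * stirlingB n (k + 1) = _
      rw [split]
      have h1 : ∀ i ∈ Finset.range (n + 1),
          Nat.choose n i * (2 ^ (i + 1 - (k + 1)) * stirling2 (i + 1) (k + 1))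
          = Nat.choose n i * (2 ^ (i - k) * stirling2 i k)
            + 2 * (k + 1) * (Nat.choose n i * (2 ^ (i - (k + 1)) * stirling2 i (k + 1))) := by
        intro i _
        show Nat.choose n i * (2 ^ (i + 1 - (k + 1)) *
            (stirling2 i k + (k + 1) * stirling2 i (k + 1))) = _
        have he : i + 1 - (k + 1) = i - k := by omega
        rw [he]
        rcases le_or_gt i k with h | h
        · rw [stirling2_eq_zero (by omega : i < k + 1)]
          ring
        · have h2 : i - k = (i - (k + 1)) + 1 := by omega
          rw [h2, pow_succ]
          ring
      rw [Finset.sum_congr rfl h1, Finset.sum_add_distrib, ← Finset.mul_sum,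
        ← ih k, ← ih (k + 1)]
      ring

lemma bellB_eq (n : ℕ) :
    bellB n = ∑ i ∈ Finset.range (n + 1), Nat.choose n i * dow i := by
  unfold bellB
  have h1 : ∀ k ∈ Finset.range (n + 1), stirlingB n k
      = ∑ i ∈ Finset.range (n + 1), Nat.choose n i * (2 ^ (i - k) * stirling2 i k) :=
    fun k _ => stirlingB_eq n k
  rw [Finset.sum_congr rfl h1, Finset.sum_comm]
  refine Finset.sum_congr rfl fun i hi => ?_
  rw [← Finset.mul_sum]
  congr 1
  unfold dow
  symm
  refine Finset.sum_subset ?_ ?_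
  · intro x hx
    simp only [Finset.mem_range] at hx ⊢
    have hi' : i < n + 1 := by simpa using hi
    omega
  · intro x _ hx
    simp only [Finset.mem_range, not_lt] at hx
    rw [stirling2_eq_zero (by omega : i < x), mul_zero]

/-- for `n ≥ 1`,
`Σ_{i=1}^{n} C(n,i) · Σ_{k=0}^{n-i} 2^(n-i-k)·S(n-i,k) = B(n) - Σ_{k=0}^{n} 2^(n-k)·S(n,k)`. -/
theorem sum_binomial_stirling2_eq (n : ℕ) (hn : 1 ≤ n) :
    (∑ i ∈ Finset.Icc 1 n, (Nat.choose n i : ℤ) *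
        ∑ k ∈ Finset.range (n - i + 1), 2 ^ (n - i - k) * (stirling2 (n - i) k : ℤ))
      = (bellB n : ℤ) - ∑ k ∈ Finset.range (n + 1), 2 ^ (n - k) * (stirling2 n k : ℤ) := by
  have hd : ∀ m : ℕ, (∑ k ∈ Finset.range (m + 1), (2 : ℤ) ^ (m - k) * (stirling2 m k : ℤ))
      = (dow m : ℤ) := by
    intro m; unfold dow; push_cast; rfl
  have h1 : (∑ i ∈ Finset.Icc 1 n, (Nat.choose n i : ℤ) *
        ∑ k ∈ Finset.range (n - i + 1), 2 ^ (n - i - k) * (stirling2 (n - i) k : ℤ))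
      = ((∑ i ∈ Finset.Icc 1 n, Nat.choose n i * dow (n - i) : ℕ) : ℤ) := by
    push_cast
    refine Finset.sum_congr rfl fun i _ => ?_
    rw [hd (n - i)]
  rw [h1, hd n]
  have key : (∑ i ∈ Finset.Icc 1 n, Nat.choose n i * dow (n - i)) + dow n = bellB n := by
    have hrefl : ∑ i ∈ Finset.range (n + 1), Nat.choose n i * dow (n - i) = bellB n := by
      rw [bellB_eq]
      have := Finset.sum_range_reflect (fun i => Nat.choose n i * dow i) (n + 1)
      simp only [Nat.add_sub_cancel] at this
      rw [← this]
      refine Finset.sum_congr rfl fun i hi => ?_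
      have hi' : i ≤ n := by simpa [Nat.lt_succ_iff] using hi
      rw [Nat.choose_symm hi']
    have hins : Finset.range (n + 1) = insert 0 (Finset.Icc 1 n) := by
      ext x
      simp only [Finset.mem_range, Finset.mem_insert, Finset.mem_Icc]
      omega
    rw [hins, Finset.sum_insert (by simp)] at hrefl
    simp only [Nat.choose_zero_right, one_mul, Nat.sub_zero] at hrefl
    omega
  have := congrArg (fun x : ℕ => (x : ℤ)) key
  push_cast at this ⊢
  linarith
end
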